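/- Let P be a connected commutative algebraic group over a finite field F_q. Then H¹(Gal(F̄_q/F_q), P(F̄_q)) = 0 (Lang's theorem), and moreover for every r ≥ 1, H¹(Gal(F_{q^r}/F_q), P(F_{q^r})) = 0. -/

import Mathlib

/-!
Write `a := f 1`. The cocycle relation forces `f n = a + σ a + ⋯ + σ^(n-1) a`, where the
exponents may be read modulo `r` because `σ^r` fixes `a`. Lang's theorem gives `a = σ b - b`,
and then the sum telescopes to `f n = σ^n b - b`; at `n = r` this reads `0 = σ^r b - b`,
so `b` is fixed by `σ^r`.
-/

open Finset

namespace AddAut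

section AddGroup

variable {A : Type*} [AddGroup A]

theorem coe_nsmul (σ : AddAut A) (n : ℕ) : ⇑(n • σ) = (⇑σ)^[n] := by
  induction n with
  | zero => rfl
  | succ n ih => rw [succ_nsmul, coe_add, ih, Function.iterate_succ]

theorem nsmul_mod_apply {σ : AddAut A} {r : ℕ} {a : A} (ha : (r • σ) a = a) (n : ℕ) :
    ((n % r) • σ) a = (n • σ) a := by
  rw [coe_nsmul] at ha
  simpa only [coe_nsmul] using Function.IsPeriodicPt.iterate_mod_apply ha n

end AddGroup

theorem sum_range_nsmul_apply_sub {A : Type*} [AddCommGroup A] (σ : AddAut A) (b : A) (n : ℕ) :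
    ∑ k ∈ range n, (k • σ) (σ b - b) = (n • σ) b - b := by
  calc ∑ k ∈ range n, (k • σ) (σ b - b)
      = ∑ k ∈ range n, (((k + 1) • σ) b - (k • σ) b) := by
        simp only [map_sub, succ_nsmul, add_apply]
    _ = (n • σ) b - (0 • σ) b := sum_range_sub (fun k ↦ (k • σ) b) n
    _ = (n • σ) b - b := by rw [zero_nsmul, zero_apply]

end AddAut

def IsCyclicCocycle {A : Type*} [AddGroup A] (σ : AddAut A) (r : ℕ) (f : ZMod r → A) : Prop :=
  ∀ i j : ZMod r, f (i + j) = f i + (i.val • σ) (f j)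

namespace IsCyclicCocycle

theorem map_zero {A : Type*} [AddGroup A] {σ : AddAut A} {r : ℕ} {f : ZMod r → A}
    (hf : IsCyclicCocycle σ r f) : f 0 = 0 := by
  simpa using hf 0 0

theorem natCast_eq_sum {A : Type*} [AddCommGroup A] {σ : AddAut A} {r : ℕ} {f : ZMod r → A}
    (hf : IsCyclicCocycle σ r f) (hfix : (r • σ) (f 1) = f 1) (n : ℕ) :
    f n = ∑ k ∈ range n, (k • σ) (f 1) := by
  induction n with
  | zero => simpa using hf.map_zero
  | succ n ih =>
    rw [Nat.cast_succ, hf, ih, sum_range_succ, ZMod.val_natCast, AddAut.nsmul_mod_apply hfix]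

end IsCyclicCocycle

/-- Lang's theorem, cohomological form: let `A` be the group of `F̄_q`-points of a connected
commutative algebraic group, with Frobenius `σ`, so that the Lang map `x ↦ σ(x) - x` is
surjective. Then `H¹(Gal(F̄_q/F_q), A) = 0` and, at every finite level `r ≥ 1`,
`H¹(Gal(F_{q^r}/F_q), A^{σ^r}) = 0`: every 1-cocycle of the cyclic group `ℤ/r` with values in
the `σ^r`-fixed points is a 1-coboundary. -/
theorem stmt_12 {A : Type} [AddCommGroup A] (σ : AddAut A)
    (hLang : ∀ a : A, ∃ b : A, σ b - b = a) :
    ∀ r : ℕ, 0 < r → ∀ f : ZMod r → A,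
      (∀ i : ZMod r, (r • σ) (f i) = f i) →
      (∀ i j : ZMod r, f (i + j) = f i + (i.val • σ) (f j)) →
      ∃ b : A, (r • σ) b = b ∧ ∀ i : ZMod r, f i = (i.val • σ) b - b := by
  intro r hr f hfix hcoc
  have hf : IsCyclicCocycle σ r f := hcoc
  have : NeZero r := ⟨hr.ne'⟩
  obtain ⟨b, hb⟩ := hLang (f 1)
  have hcob : ∀ n : ℕ, f n = (n • σ) b - b := fun n ↦ by
    rw [hf.natCast_eq_sum (hfix 1), ← hb, AddAut.sum_range_nsmul_apply_sub]
  refine ⟨b, ?_, fun i ↦ ?_⟩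
  · have h := hcob r
    rw [ZMod.natCast_self, hf.map_zero] at h
    exact sub_eq_zero.mp h.symm
  · simpa only [ZMod.natCast_zmod_val] using hcob i.val
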